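/- arXiv:2411.01528 — 7 statements merged into one kernel-verified Lean document; each statement's English description precedes it below -/
import Mathlib

section
/- Let W be an n×n real symmetric positive definite matrix and S an n×r real matrix with full column rank. For every r×n real matrix G satisfying SGS = S, the matrix SGWGᵀSᵀ − S(SᵀW⁻¹S)⁻¹Sᵀ is positive semidefinite; that is, the minT choice G* = (SᵀW⁻¹S)⁻¹SᵀW⁻¹ minimizes the reconciled error covariance SGWGᵀSᵀ in the Loewner order over all mapping matrices satisfying the constraint SGS = S. -/
/-!
Write `M = SᵀW⁻¹S`, `G* = M⁻¹SᵀW⁻¹` and `P = S G*`. For any `G`, `W (S G*)ᵀ = S M⁻¹`, so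
`SGW(SG*)ᵀ = SGSM⁻¹Sᵀ`; this equals `SM⁻¹Sᵀ` both for `G` with `SGS = S` and for `G = G*`
(`M⁻¹MM⁻¹ = M⁻¹` holds for every square matrix, a singular one having inverse `0`). Hence the
cross terms in the expansion of `(SG - P) W (SG - P)ᵀ` agree with `PWPᵀ = SM⁻¹Sᵀ`, and that
positive semidefinite matrix equals `SGWGᵀSᵀ - SM⁻¹Sᵀ`.
-/

open Matrix

namespace Matrix

variable {m n R : Type*}

theorem nonsing_inv_mul_mul_nonsing_inv [Fintype n] [DecidableEq n] [CommRing R]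
    (A : Matrix n n R) : A⁻¹ * A * A⁻¹ = A⁻¹ := by
  by_cases h : IsUnit A.det
  · rw [nonsing_inv_mul A h, Matrix.one_mul]
  · rw [nonsing_inv_apply_not_isUnit A h, Matrix.mul_zero]

theorem PosSemidef.mul_mul_conjTranspose_sub_of_mul_mul_conjTranspose_eq [Fintype n] [Finite m]
    [Ring R] [PartialOrder R] [StarRing R] {W : Matrix n n R} (hW : W.PosSemidef)
    {A B : Matrix m n R} (h : A * W * Bᴴ = B * W * Bᴴ) :
    (A * W * Aᴴ - B * W * Bᴴ).PosSemidef := by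
  have h' : B * W * Aᴴ = B * W * Bᴴ := by
    simpa only [conjTranspose_mul, conjTranspose_conjTranspose, hW.isHermitian.eq,
      Matrix.mul_assoc] using congrArg (·ᴴ) h
  have hsq : (A - B) * W * (A - B)ᴴ = A * W * Aᴴ - B * W * Bᴴ := by
    rw [conjTranspose_sub, Matrix.sub_mul, Matrix.sub_mul, Matrix.mul_sub, Matrix.mul_sub, h, h']
    abel
  exact hsq ▸ hW.mul_mul_conjTranspose_same (A - B)

end Matrix

section MinT

variable {n r : Type*} [Fintype n] [DecidableEq n] [Fintype r] [DecidableEq r]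

noncomputable def minTMap (W : Matrix n n ℝ) (S : Matrix n r ℝ) : Matrix r n ℝ :=
  (Sᵀ * W⁻¹ * S)⁻¹ * Sᵀ * W⁻¹

theorem mul_transpose_minTMap {W : Matrix n n ℝ} (hW : W.PosDef) (S : Matrix n r ℝ) :
    W * (minTMap W S)ᵀ = S * (Sᵀ * W⁻¹ * S)⁻¹ := by
  have hWinv : W⁻¹ᵀ = W⁻¹ := hW.inv.isHermitian.eq
  have hM : (Sᵀ * W⁻¹ * S)⁻¹ᵀ = (Sᵀ * W⁻¹ * S)⁻¹ := by
    rw [transpose_nonsing_inv, transpose_mul, transpose_mul, hWinv, transpose_transpose,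
      Matrix.mul_assoc]
  rw [minTMap, transpose_mul, transpose_mul, hWinv, hM, transpose_transpose,
    mul_nonsing_inv_cancel_left _ _ (W.isUnit_iff_isUnit_det.mp hW.isUnit)]

theorem minTMap_mul_mul_nonsing_inv (W : Matrix n n ℝ) (S : Matrix n r ℝ) :
    minTMap W S * S * (Sᵀ * W⁻¹ * S)⁻¹ = (Sᵀ * W⁻¹ * S)⁻¹ := by
  simpa only [minTMap, Matrix.mul_assoc] using nonsing_inv_mul_mul_nonsing_inv (Sᵀ * W⁻¹ * S)

theorem mul_mul_mul_transpose_minTMap {W : Matrix n n ℝ} (hW : W.PosDef) (S : Matrix n r ℝ)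
    (G : Matrix r n ℝ) :
    S * G * W * (S * minTMap W S)ᵀ = S * G * S * (Sᵀ * W⁻¹ * S)⁻¹ * Sᵀ := by
  rw [transpose_mul, ← Matrix.mul_assoc, Matrix.mul_assoc _ W, mul_transpose_minTMap hW]
  simp only [Matrix.mul_assoc]

end MinT

theorem minT_loewner_optimal_general {n r : ℕ}
    (W : Matrix (Fin n) (Fin n) ℝ) (S : Matrix (Fin n) (Fin r) ℝ)
    (hW : W.PosDef) :
    ∀ G : Matrix (Fin r) (Fin n) ℝ, S * G * S = S →
      (S * G * W * Gᵀ * Sᵀ - S * (Sᵀ * W⁻¹ * S)⁻¹ * Sᵀ).PosSemidef := by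
  intro G hG
  have hcross : S * G * W * (S * minTMap W S)ᵀ = S * (Sᵀ * W⁻¹ * S)⁻¹ * Sᵀ := by
    rw [mul_mul_mul_transpose_minTMap hW, hG]
  have hopt : S * minTMap W S * W * (S * minTMap W S)ᵀ = S * (Sᵀ * W⁻¹ * S)⁻¹ * Sᵀ := by
    rw [mul_mul_mul_transpose_minTMap hW, Matrix.mul_assoc S (minTMap W S) S,
      Matrix.mul_assoc S (minTMap W S * S), minTMap_mul_mul_nonsing_inv]
  have hpsd := hW.posSemidef.mul_mul_conjTranspose_sub_of_mul_mul_conjTranspose_eq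
    (A := S * G) (B := S * minTMap W S) (hcross.trans hopt.symm)
  rw [conjTranspose_eq_transpose_of_trivial, conjTranspose_eq_transpose_of_trivial, hopt,
    transpose_mul] at hpsd
  simpa only [Matrix.mul_assoc] using hpsd

/-- For every mapping matrix G with SGS = S, the difference
SGWGᵀSᵀ − S(SᵀW⁻¹S)⁻¹Sᵀ is positive semidefinite: the minT choice minimizes the
reconciled error covariance in the Loewner order. -/
theorem minT_loewner_optimal {n r : ℕ}
    (W : Matrix (Fin n) (Fin n) ℝ) (S : Matrix (Fin n) (Fin r) ℝ)
    (hW : W.PosDef) (hS : S.rank = r) :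
    ∀ G : Matrix (Fin r) (Fin n) ℝ, S * G * S = S →
      (S * G * W * Gᵀ * Sᵀ - S * (Sᵀ * W⁻¹ * S)⁻¹ * Sᵀ).PosSemidef :=
  minT_loewner_optimal_general W S hW
end

section
/- Let W be an n×n real symmetric positive definite matrix and S an n×r real matrix with full column rank. For every r×n real matrix G satisfying SGS = S, we have tr(S(SᵀW⁻¹S)⁻¹Sᵀ) ≤ tr(SGWGᵀSᵀ); that is, G* = (SᵀW⁻¹S)⁻¹SᵀW⁻¹ solves the minimum trace problem min_G tr(SGWGᵀSᵀ) subject to SGS = S. -/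
/-!
Write `M = SᵀW⁻¹S` and `G* = M⁻¹SᵀW⁻¹`. Since `G*S = 1` and `W G*ᵀ = SM⁻¹`, the matrix
`D = SG - SG*` of any `G` with `SGS = S` satisfies `DS = 0`, so `D` is `W`-orthogonal to `SG*`:
`S G W Gᵀ Sᵀ = SG* W (SG*)ᵀ + D W Dᵀ = S M⁻¹ Sᵀ + D W Dᵀ`, and the last term is positive
semidefinite, hence has nonnegative trace.
-/

open Matrix

namespace Matrix

theorem mulVec_injective_of_rank_eq_card {m k K : Type*} [Fintype k] [Field K] {S : Matrix m k K}
    (hS : S.rank = Fintype.card k) : Function.Injective S.mulVec := by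
  rw [mulVec_injective_iff, linearIndependent_iff_card_eq_finrank_span, ← hS,
    rank_eq_finrank_span_cols]
  rfl

variable {m k K : Type*} [Fintype m] [Fintype k] [DecidableEq m] [DecidableEq k]

section minTMap

variable [CommRing K] (S : Matrix m k K) (W : Matrix m m K)

noncomputable def minTMap : Matrix k m K := (Sᵀ * W⁻¹ * S)⁻¹ * Sᵀ * W⁻¹

variable {S W}

theorem minTMap_mul_self (hM : IsUnit (Sᵀ * W⁻¹ * S).det) : minTMap S W * S = 1 := by
  simpa only [minTMap, Matrix.mul_assoc] using nonsing_inv_mul _ hM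

theorem mul_transpose_minTMap (hWs : W.IsSymm) (hW : IsUnit W.det) :
    W * (minTMap S W)ᵀ = S * (Sᵀ * W⁻¹ * S)⁻¹ := by
  simp only [minTMap, transpose_mul, transpose_nonsing_inv, transpose_transpose, hWs.eq,
    Matrix.mul_assoc, mul_nonsing_inv_cancel_left _ _ hW]

theorem mul_mul_transpose_eq_add_of_mul_mul_eq_self (hWs : W.IsSymm) (hW : IsUnit W.det)
    (hM : IsUnit (Sᵀ * W⁻¹ * S).det) {G : Matrix k m K} (hG : S * G * S = S) :
    S * G * W * Gᵀ * Sᵀ = S * (Sᵀ * W⁻¹ * S)⁻¹ * Sᵀ +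
      (S * G - S * minTMap S W) * W * (S * G - S * minTMap S W)ᵀ := by
  set P := S * minTMap S W
  set D := S * G - P with hD_def
  have hWP : W * Pᵀ = S * (Sᵀ * W⁻¹ * S)⁻¹ * Sᵀ := by
    rw [transpose_mul, ← Matrix.mul_assoc, mul_transpose_minTMap hWs hW]
  have hPS : P * S = S := by rw [Matrix.mul_assoc, minTMap_mul_self hM, Matrix.mul_one]
  have hDS : D * S = 0 := by rw [hD_def, Matrix.sub_mul, hG, hPS, sub_self]
  have hDWP : D * W * Pᵀ = 0 := by
    rw [Matrix.mul_assoc, hWP, ← Matrix.mul_assoc, ← Matrix.mul_assoc, hDS, Matrix.zero_mul,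
      Matrix.zero_mul]
  have hPWD : P * W * Dᵀ = 0 := by
    simpa only [transpose_mul, transpose_transpose, hWs.eq, Matrix.mul_assoc,
      transpose_zero] using congrArg transpose hDWP
  have hPWP : P * W * Pᵀ = S * (Sᵀ * W⁻¹ * S)⁻¹ * Sᵀ := by
    rw [Matrix.mul_assoc, hWP, ← Matrix.mul_assoc, ← Matrix.mul_assoc, hPS]
  calc S * G * W * Gᵀ * Sᵀ = (P + D) * W * (P + D)ᵀ := by
        simp only [D, add_sub_cancel, transpose_mul, Matrix.mul_assoc]
    _ = P * W * Pᵀ + P * W * Dᵀ + D * W * Pᵀ + D * W * Dᵀ := by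
        simp only [transpose_add, add_mul, mul_add]
        abel
    _ = S * (Sᵀ * W⁻¹ * S)⁻¹ * Sᵀ + D * W * Dᵀ := by
        rw [hPWP, hPWD, hDWP, add_zero, add_zero]

end minTMap

theorem trace_mul_inv_mul_transpose_le_of_mul_mul_eq_self {W : Matrix m m ℝ}
    {S : Matrix m k ℝ} (hW : W.PosDef) (hS : Function.Injective S.mulVec) {G : Matrix k m ℝ}
    (hG : S * G * S = S) :
    (S * (Sᵀ * W⁻¹ * S)⁻¹ * Sᵀ).trace ≤ (S * G * W * Gᵀ * Sᵀ).trace := by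
  have hWs : W.IsSymm := isHermitian_iff_isSymm.mp hW.isHermitian
  have hM : (Sᵀ * W⁻¹ * S).PosDef := by
    simpa only [conjTranspose_eq_transpose_of_trivial] using
      hW.inv.conjTranspose_mul_mul_same hS
  set D := S * G - S * minTMap S W
  have hD : 0 ≤ (D * W * Dᵀ).trace := by
    simpa only [conjTranspose_eq_transpose_of_trivial] using
      (hW.posSemidef.mul_mul_conjTranspose_same D).trace_nonneg
  rw [mul_mul_transpose_eq_add_of_mul_mul_eq_self hWs (isUnit_iff_isUnit_det _ |>.mp hW.isUnit)
    (isUnit_iff_isUnit_det _ |>.mp hM.isUnit) hG, trace_add]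
  exact le_add_of_nonneg_right hD

end Matrix

/-- For every mapping matrix G with SGS = S, we have
tr(S(SᵀW⁻¹S)⁻¹Sᵀ) ≤ tr(SGWGᵀSᵀ): G* = (SᵀW⁻¹S)⁻¹SᵀW⁻¹ solves the minimum trace
problem. -/
theorem minT_trace_optimal {n r : ℕ}
    (W : Matrix (Fin n) (Fin n) ℝ) (S : Matrix (Fin n) (Fin r) ℝ)
    (hW : W.PosDef) (hS : S.rank = r) :
    ∀ G : Matrix (Fin r) (Fin n) ℝ, S * G * S = S →
      (S * (Sᵀ * W⁻¹ * S)⁻¹ * Sᵀ).trace ≤ (S * G * W * Gᵀ * Sᵀ).trace := fun _ hG =>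
  trace_mul_inv_mul_transpose_le_of_mul_mul_eq_self hW
    (mulVec_injective_of_rank_eq_card (by rwa [Fintype.card_fin])) hG
end

section
/- Let W be an n×n real symmetric positive definite matrix and S an n×r real matrix with full column rank. Then W − S(SᵀW⁻¹S)⁻¹Sᵀ is positive semidefinite, i.e., S(SᵀW⁻¹S)⁻¹Sᵀ ⪯ W in the Loewner order: minT reconciliation does not increase the error covariance relative to the base forecasts. -/
/-!
The block matrix `[[W, S], [Sᵀ, SᵀW⁻¹S]]` is positive semidefinite, because its Schur complement
with respect to the positive definite block `W` vanishes. Full column rank of `S` makes the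
lower-right block `SᵀW⁻¹S` positive definite, and the Schur complement with respect to that block,
`W - S(SᵀW⁻¹S)⁻¹Sᵀ`, is then positive semidefinite as well.
-/

open Matrix

namespace Matrix

theorem mulVec_injective_of_rank_eq_card_s7 {K m n : Type*} [Field K] [Fintype n]
    {A : Matrix m n K} (h : A.rank = Fintype.card n) : Function.Injective A.mulVec :=
  mulVec_injective_iff.2 <| linearIndependent_iff_card_eq_finrank_span.2 <| by
    rw [← h, rank_eq_finrank_span_cols, Set.finrank]

section SchurComplement

variable {K m n : Type*} [Fintype m] [Fintype n] [DecidableEq m]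
variable [Field K] [PartialOrder K] [StarRing K] [StarOrderedRing K]

theorem PosDef.posSemidef_fromBlocks_conjTranspose_mul_inv_mul {A : Matrix m m K}
    (hA : A.PosDef) (B : Matrix m n K) :
    (fromBlocks A B Bᴴ (Bᴴ * A⁻¹ * B)).PosSemidef := by
  have := hA.isUnit.invertible
  rw [hA.fromBlocks₁₁, sub_self]
  exact .zero

theorem PosDef.posSemidef_sub_mul_inv_conjTranspose_mul_inv_mul_mul_conjTranspose [DecidableEq n]
    {A : Matrix m m K} (hA : A.PosDef) {B : Matrix m n K} (hB : Function.Injective B.mulVec) :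
    (A - B * (Bᴴ * A⁻¹ * B)⁻¹ * Bᴴ).PosSemidef := by
  have hD : (Bᴴ * A⁻¹ * B).PosDef := hA.inv.conjTranspose_mul_mul_same hB
  have := hD.isUnit.invertible
  exact (hD.fromBlocks₂₂ A B).1 (hA.posSemidef_fromBlocks_conjTranspose_mul_inv_mul B)

end SchurComplement

end Matrix

/-- W − S(SᵀW⁻¹S)⁻¹Sᵀ is positive semidefinite: minT reconciliation does not
increase the error covariance relative to the base forecasts. -/
theorem minT_improves_covariance {n r : ℕ}
    (W : Matrix (Fin n) (Fin n) ℝ) (S : Matrix (Fin n) (Fin r) ℝ)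
    (hW : W.PosDef) (hS : S.rank = r) :
    (W - S * (Sᵀ * W⁻¹ * S)⁻¹ * Sᵀ).PosSemidef := by
  have hS_inj : Function.Injective S.mulVec :=
    mulVec_injective_of_rank_eq_card_s7 (by rw [hS, Fintype.card_fin])
  simpa only [conjTranspose_eq_transpose_of_trivial] using
    hW.posSemidef_sub_mul_inv_conjTranspose_mul_inv_mul_mul_conjTranspose hS_inj
end

section
/- Let m, k, z be integers with k ≥ 1 dividing m and 0 ≤ z < m, and set M = m/k and d = ⌊z/k⌋. Consider the block matrix product B = (0_{(M−d)×d} | I_{M−d}) · (I_M ⊗ 1_kᵀ) · [0_{z×(m−z)}; I_{m−z}], a (M−d)×(m−z) matrix. Then for 1 ≤ u ≤ M−d and 1 ≤ t ≤ m−z, the entry B_{u,t} equals 1 if k(d+u−1) − z < t ≤ k(d+u) − z and 0 otherwise. In particular, stacking these blocks over the aggregation levels k ∈ K yields the identity S_z = P_z S [0_{z×(m−z)}; I_{m−z}] for the pruned summing matrix. -/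
open Matrix Kronecker

/-- The pruned summing-matrix block identity: with M = m/k and d = ⌊z/k⌋, the
entries of B = (0_{(M−d)×d} | I_{M−d}) · (I_M ⊗ 1_kᵀ) · [0_{z×(m−z)}; I_{m−z}]
are B_{u,t} = 1 iff the (z-shifted, 0-based) column index t + z lies in the
u-th remaining aggregation block, i.e. k(d+u) ≤ t + z < k(d+u+1), and 0
otherwise. -/
theorem pruned_summing_matrix_entries (m k z : ℕ) (hk : 1 ≤ k) (hkm : k ∣ m)
    (hz : z < m)
    (P : Matrix (Fin (m / k - z / k)) (Fin (m / k)) ℝ)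
    (hP : P = Matrix.of fun (u : Fin (m / k - z / k)) (j : Fin (m / k)) => if (j : ℕ) = z / k + (u : ℕ) then 1 else 0)
    (A : Matrix (Fin (m / k)) (Fin m) ℝ)
    (hA : A = Matrix.reindex (Equiv.prodUnique (Fin (m / k)) (Fin 1))
        (finProdFinEquiv.trans (finCongr (Nat.div_mul_cancel hkm)))
        ((1 : Matrix (Fin (m / k)) (Fin (m / k)) ℝ) ⊗ₖ
          (Matrix.of fun (_ : Fin 1) (_ : Fin k) => (1 : ℝ))))
    (E : Matrix (Fin m) (Fin (m - z)) ℝ)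
    (hE : E = Matrix.of fun (t : Fin m) (s : Fin (m - z)) => if (t : ℕ) = z + (s : ℕ) then 1 else 0) :
    ∀ (u : Fin (m / k - z / k)) (t : Fin (m - z)),
      (P * A * E) u t =
        if k * (z / k + (u : ℕ)) ≤ (t : ℕ) + z ∧
            (t : ℕ) + z < k * (z / k + (u : ℕ) + 1) then 1 else 0 := by
  intro u t
  have hdu : z / k + (u : ℕ) < m / k := by
    have h1 := u.2
    omega
  have htz : z + (t : ℕ) < m := by
    have h1 := t.2
    omega
  have hPA : ∀ x : Fin m, (P * A) u x = A ⟨z / k + (u : ℕ), hdu⟩ x := by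
    intro x
    rw [Matrix.mul_apply, hP]
    rw [Finset.sum_eq_single (⟨z / k + (u : ℕ), hdu⟩ : Fin (m / k))]
    · simp
    · intro j _ hj
      have : (j : ℕ) ≠ z / k + (u : ℕ) := fun h => hj (Fin.ext h)
      simp [this]
    · simp
  have hBE : (P * A * E) u t = A ⟨z / k + (u : ℕ), hdu⟩ ⟨z + (t : ℕ), htz⟩ := by
    rw [Matrix.mul_apply]
    simp_rw [hPA, hE]
    rw [Finset.sum_eq_single (⟨z + (t : ℕ), htz⟩ : Fin m)]
    · simp
    · intro x _ hx
      have : (x : ℕ) ≠ z + (t : ℕ) := fun h => hx (Fin.ext h)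
      simp [this]
    · simp
  rw [hBE, hA]
  simp only [Matrix.reindex_apply, Matrix.submatrix_apply, Equiv.symm_trans_apply,
    Matrix.kroneckerMap_apply, Matrix.of_apply, mul_one]
  have hsymm : (Equiv.prodUnique (Fin (m / k)) (Fin 1)).symm
      (⟨z / k + (u : ℕ), hdu⟩ : Fin (m / k)) =
      ((⟨z / k + (u : ℕ), hdu⟩ : Fin (m / k)), (0 : Fin 1)) := rfl
  rw [hsymm]
  have hcol : ((finProdFinEquiv.symm ((finCongr (Nat.div_mul_cancel hkm)).symm
      (⟨z + (t : ℕ), htz⟩ : Fin m))).1 : ℕ) = (z + (t : ℕ)) / k := rfl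
  rw [Matrix.one_apply]
  have hiff : ((z + (t : ℕ)) / k = z / k + (u : ℕ)) ↔
      (k * (z / k + (u : ℕ)) ≤ (t : ℕ) + z ∧
        (t : ℕ) + z < k * (z / k + (u : ℕ) + 1)) := by
    rw [Nat.add_comm (t : ℕ) z]
    constructor
    · intro h
      rw [← h]
      exact ⟨Nat.mul_div_le _ k, Nat.lt_mul_div_succ _ (by omega)⟩
    · rintro ⟨h1, h2⟩
      refine Nat.div_eq_of_lt_le ?_ ?_
      · rwa [Nat.mul_comm]
      · rw [Nat.add_mul, Nat.one_mul, Nat.mul_comm]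
        rw [Nat.mul_add, Nat.mul_one] at h2
        omega
  have hcond : ((⟨z / k + (u : ℕ), hdu⟩ : Fin (m / k)) =
      (finProdFinEquiv.symm ((finCongr (Nat.div_mul_cancel hkm)).symm
        (⟨z + (t : ℕ), htz⟩ : Fin m))).1) ↔
      (k * (z / k + (u : ℕ)) ≤ (t : ℕ) + z ∧
        (t : ℕ) + z < k * (z / k + (u : ℕ) + 1)) := by
    rw [Fin.ext_iff, hcol]
    exact eq_comm.trans hiff
  rw [if_congr hcond rfl rfl]
end

section
/- Let φ be a real number with |φ| < 1, m a positive integer, and 0 ≤ z < m. Let Φ be the m×m lower-triangular matrix with Φ_{ij} = φ^{i−j} for i ≥ j and 0 otherwise, let 1_m ∈ ℝ^m be the all-ones vector, and u_z ∈ ℝ^m the vector with (u_z)_j = 1 for j ≤ m−z and 0 otherwise. Then u_zᵀΦΦᵀu_z ≤ 1_mᵀΦΦᵀ1_m; that is, the top-level forecast error variance after z new bottom-level observations is at most the top-level forecast error variance without new observations. -/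
open Matrix

private lemma ar1_key (φ : ℝ) (m : ℕ)
    (Φ : Matrix (Fin m) (Fin m) ℝ)
    (hΦ : Φ = Matrix.of fun (i j : Fin m) =>
      if (j : ℕ) ≤ (i : ℕ) then φ ^ ((i : ℕ) - (j : ℕ)) else 0)
    (x : Fin m → ℝ) :
    x ⬝ᵥ (Φ * Φᵀ).mulVec x = ∑ j, (Φᵀ.mulVec x j) ^ 2 := by
  rw [← Matrix.mulVec_mulVec, Matrix.dotProduct_mulVec, ← Matrix.mulVec_transpose]
  simp [dotProduct, sq]

private lemma ar1_col (φ : ℝ) (m : ℕ)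
    (Φ : Matrix (Fin m) (Fin m) ℝ)
    (hΦ : Φ = Matrix.of fun (i j : Fin m) =>
      if (j : ℕ) ≤ (i : ℕ) then φ ^ ((i : ℕ) - (j : ℕ)) else 0)
    (N : ℕ) (hN : N ≤ m) (j : Fin m) :
    Φᵀ.mulVec (fun (i : Fin m) => if (i : ℕ) < N then (1:ℝ) else 0) j
      = ∑ k ∈ Finset.range (N - (j : ℕ)), φ ^ k := by
  simp only [Matrix.mulVec, dotProduct, Matrix.transpose_apply, hΦ, Matrix.of_apply]
  rw [Fin.sum_univ_eq_sum_range
    (fun i => (if (j : ℕ) ≤ i then φ ^ (i - (j : ℕ)) else 0) * (if i < N then (1:ℝ) else 0))]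
  have h1 : ∑ i ∈ Finset.range m,
      (if (j : ℕ) ≤ i then φ ^ (i - (j : ℕ)) else 0) * (if i < N then (1:ℝ) else 0)
      = ∑ i ∈ Finset.Ico (j : ℕ) N, φ ^ (i - (j : ℕ)) := by
    rw [← Finset.sum_subset (s₁ := Finset.Ico (j : ℕ) N) (s₂ := Finset.range m)]
    · apply Finset.sum_congr rfl
      intro i hi
      rw [Finset.mem_Ico] at hi
      simp [hi.1, hi.2]
    · intro i hi
      rw [Finset.mem_Ico] at hi
      exact Finset.mem_range.2 (lt_of_lt_of_le hi.2 hN)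
    · intro i _ hi
      rw [Finset.mem_Ico, not_and_or, not_le, not_lt] at hi
      rcases hi with h | h
      · simp [Nat.not_le_of_lt h]
      · simp [Nat.not_lt_of_le h]
  rw [h1, Finset.sum_Ico_eq_sum_range]
  apply Finset.sum_congr rfl
  intro k _
  congr 1
  omega

/-- The top-level forecast error variance after z new bottom-level observations
is at most the top-level forecast error variance without new observations:
u_zᵀΦΦᵀu_z ≤ 1_mᵀΦΦᵀ1_m. -/
theorem ar1_updated_top_level_variance_le (φ : ℝ) (hφ : |φ| < 1)
    (m z : ℕ) (hm : 0 < m) (hz : z < m)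
    (Φ : Matrix (Fin m) (Fin m) ℝ)
    (hΦ : Φ = Matrix.of fun (i j : Fin m) =>
      if (j : ℕ) ≤ (i : ℕ) then φ ^ ((i : ℕ) - (j : ℕ)) else 0)
    (u : Fin m → ℝ) (hu : u = fun (j : Fin m) => if (j : ℕ) < m - z then 1 else 0) :
    u ⬝ᵥ (Φ * Φᵀ).mulVec u ≤
      (fun _ => (1 : ℝ)) ⬝ᵥ (Φ * Φᵀ).mulVec (fun _ => (1 : ℝ)) := by
  set S : ℕ → ℝ := fun n => ∑ k ∈ Finset.range n, φ ^ k with hS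
  have hones : (fun (_ : Fin m) => (1:ℝ)) = fun (i : Fin m) => if (i : ℕ) < m then (1:ℝ) else 0 := by
    funext i; simp [i.is_lt]
  have hLHS : u ⬝ᵥ (Φ * Φᵀ).mulVec u = ∑ j ∈ Finset.range m, (S (m - z - j)) ^ 2 := by
    rw [ar1_key φ m Φ hΦ, hu]
    have h : ∀ j : Fin m, (Φᵀ.mulVec (fun (i : Fin m) => if (i : ℕ) < m - z then (1:ℝ) else 0)) j
        = S (m - z - (j : ℕ)) := fun j => ar1_col φ m Φ hΦ (m - z) (Nat.sub_le m z) j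
    rw [Finset.sum_congr rfl (fun j _ => by rw [h j])]
    exact Fin.sum_univ_eq_sum_range (fun j => (S (m - z - j)) ^ 2) m
  have hRHS : (fun (_ : Fin m) => (1:ℝ)) ⬝ᵥ (Φ * Φᵀ).mulVec (fun (_ : Fin m) => (1:ℝ))
      = ∑ j ∈ Finset.range m, (S (m - j)) ^ 2 := by
    rw [ar1_key φ m Φ hΦ, hones]
    have h : ∀ j : Fin m, (Φᵀ.mulVec (fun (i : Fin m) => if (i : ℕ) < m then (1:ℝ) else 0)) j
        = S (m - (j : ℕ)) := fun j => ar1_col φ m Φ hΦ m le_rfl j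
    rw [Finset.sum_congr rfl (fun j _ => by rw [h j])]
    exact Fin.sum_univ_eq_sum_range (fun j => (S (m - j)) ^ 2) m
  rw [hLHS, hRHS]
  have step1 : ∑ j ∈ Finset.range m, (S (m - z - j)) ^ 2
      = ∑ j ∈ Finset.range (m - z), (S (m - z - j)) ^ 2 := by
    symm
    apply Finset.sum_subset
    · exact Finset.range_subset_range.2 (Nat.sub_le m z)
    · intro j _ hj
      rw [Finset.mem_range, not_lt] at hj
      have : m - z - j = 0 := by omega
      simp [this, hS]
  have step2 : ∑ j ∈ Finset.range (m - z), (S (m - z - j)) ^ 2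
      = ∑ j ∈ Finset.Ico z m, (S (m - j)) ^ 2 := by
    rw [Finset.sum_Ico_eq_sum_range]
    apply Finset.sum_congr rfl
    intro j _
    congr 2
    omega
  rw [step1, step2]
  apply Finset.sum_le_sum_of_subset_of_nonneg
  · intro i hi
    rw [Finset.mem_Ico] at hi
    exact Finset.mem_range.2 hi.2
  · intro i _ _
    positivity
end

section
/- Let φ, σ be real numbers with |φ| < 1 and σ > 0, let m > 1 be an integer, and let 0 ≤ z < m. Let Φ be the m×m lower-triangular matrix with Φ_{ij} = φ^{i−j} for i ≥ j and 0 otherwise, and u_z ∈ ℝ^m with (u_z)_j = 1 for j ≤ m−z and 0 otherwise. Then σ² u_zᵀΦΦᵀu_z + (σ²/(1−φ²)) Σ_{j=1}^{m−z} (1 − φ^{2j}) ≤ σ² u_0ᵀΦΦᵀu_0 + (σ²/(1−φ²)) Σ_{j=1}^{m} (1 − φ^{2j}). That is, the total (top-level plus bottom-level) MSE of the updated and reconciled forecasts after z new bottom-level observations is at most the total MSE of the reconciled forecasts without new data. -/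
open Matrix


private lemma ar1_aux_sum (φ : ℝ) (m w k : ℕ) :
    (∑ i ∈ Finset.range m, (if k ≤ i then φ ^ (i - k) else 0) * if i < m - w then 1 else 0) =
    ∑ t ∈ Finset.range (m - w - k), φ ^ t := by
  have step : ∀ i ∈ Finset.range m,
      ((if k ≤ i then φ ^ (i - k) else 0) * if i < m - w then 1 else 0)
      = if i ∈ Finset.Ico k (m - w) then φ ^ (i - k) else 0 := by
    intro i _
    by_cases h1 : k ≤ i <;> by_cases h2 : i < m - w <;>
      simp [Finset.mem_Ico, h1, h2]
  rw [Finset.sum_congr rfl step, Finset.sum_ite_mem,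
    Finset.inter_eq_right.mpr ?_, Finset.sum_Ico_eq_sum_range]
  · exact Finset.sum_congr rfl fun t _ => by rw [Nat.add_sub_cancel_left]
  · intro i hi
    simp only [Finset.mem_Ico] at hi
    exact Finset.mem_range.mpr (lt_of_lt_of_le hi.2 (Nat.sub_le _ _))

private lemma ar1_quad_form (φ : ℝ) (m w : ℕ)
    (Φ : Matrix (Fin m) (Fin m) ℝ)
    (hΦ : Φ = Matrix.of fun (i j : Fin m) =>
      if (j : ℕ) ≤ (i : ℕ) then φ ^ ((i : ℕ) - (j : ℕ)) else 0)
    (u : ℕ → Fin m → ℝ)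
    (hu : ∀ w, u w = fun (j : Fin m) => if (j : ℕ) < m - w then 1 else 0) :
    u w ⬝ᵥ (Φ * Φᵀ).mulVec (u w)
      = ∑ k ∈ Finset.range m, (∑ t ∈ Finset.range (m - w - k), φ ^ t) ^ 2 := by
  have h1 : (Φ * Φᵀ).mulVec (u w) = Φ.mulVec (Φᵀ.mulVec (u w)) := by
    rw [Matrix.mulVec_mulVec]
  rw [h1, Matrix.dotProduct_mulVec, ← Matrix.mulVec_transpose]
  have h2 : ∀ k : Fin m, (Φᵀ.mulVec (u w)) k
      = ∑ t ∈ Finset.range (m - w - (k : ℕ)), φ ^ t := by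
    intro k
    rw [hΦ, hu]
    simp only [Matrix.mulVec, dotProduct, Matrix.transpose_apply, Matrix.of_apply]
    rw [Fin.sum_univ_eq_sum_range
      (fun i => (if (k:ℕ) ≤ i then φ ^ (i - (k:ℕ)) else 0) * (if i < m - w then 1 else 0))]
    exact ar1_aux_sum φ m w k
  simp only [dotProduct, h2, ← sq]
  exact Fin.sum_univ_eq_sum_range (fun k => (∑ t ∈ Finset.range (m - w - k), φ ^ t) ^ 2) m

/-- Theorem 2 (first inequality) for K = {m, 1} with a bottom-level stationary
AR(1): the total (top-level plus bottom-level) MSE of the updated and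
reconciled forecasts after z new bottom-level observations is at most the total
MSE of the reconciled forecasts without new data. -/
theorem ar1_updated_total_mse_le (φ σ : ℝ) (hφ : |φ| < 1) (hσ : 0 < σ)
    (m z : ℕ) (hm : 1 < m) (hz : z < m)
    (Φ : Matrix (Fin m) (Fin m) ℝ)
    (hΦ : Φ = Matrix.of fun (i j : Fin m) =>
      if (j : ℕ) ≤ (i : ℕ) then φ ^ ((i : ℕ) - (j : ℕ)) else 0)
    (u : ℕ → Fin m → ℝ)
    (hu : ∀ w, u w = fun (j : Fin m) => if (j : ℕ) < m - w then 1 else 0) :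
    σ ^ 2 * (u z ⬝ᵥ (Φ * Φᵀ).mulVec (u z)) +
        σ ^ 2 / (1 - φ ^ 2) * ∑ j ∈ Finset.Icc 1 (m - z), (1 - φ ^ (2 * j)) ≤
      σ ^ 2 * (u 0 ⬝ᵥ (Φ * Φᵀ).mulVec (u 0)) +
        σ ^ 2 / (1 - φ ^ 2) * ∑ j ∈ Finset.Icc 1 m, (1 - φ ^ (2 * j)) := by
  have hφ2 : φ ^ 2 < 1 := by have := abs_lt.mp hφ; nlinarith
  have hφ2' : (0:ℝ) ≤ φ ^ 2 := sq_nonneg φ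
  -- quadratic form comparison
  have hquad : u z ⬝ᵥ (Φ * Φᵀ).mulVec (u z) ≤ u 0 ⬝ᵥ (Φ * Φᵀ).mulVec (u 0) := by
    rw [ar1_quad_form φ m z Φ hΦ u hu, ar1_quad_form φ m 0 Φ hΦ u hu]
    -- LHS sum: terms with k ≥ m - z are zero
    have hzero : ∀ k ∈ Finset.range m, k ∉ Finset.range (m - z) →
        (∑ t ∈ Finset.range (m - z - k), φ ^ t) ^ 2 = 0 := by
      intro k _ hk
      have : m - z - k = 0 := Nat.sub_eq_zero_of_le (le_of_not_gt (fun h => hk (Finset.mem_range.mpr h)))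
      simp [this]
    rw [← Finset.sum_subset (Finset.range_subset_range.mpr (Nat.sub_le m z)) hzero]
    -- reindex: Σ_{k < m-z} f(m-z-k) = Σ_{k ∈ Ico z m} f(m-k)
    have hre : ∑ k ∈ Finset.range (m - z), (∑ t ∈ Finset.range (m - z - k), φ ^ t) ^ 2
        = ∑ k ∈ Finset.Ico z m, (∑ t ∈ Finset.range (m - 0 - k), φ ^ t) ^ 2 := by
      rw [Finset.sum_Ico_eq_sum_range]
      refine Finset.sum_congr rfl fun k _ => ?_
      have : m - z - k = m - 0 - (z + k) := by omega
      rw [this]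
    rw [hre]
    refine Finset.sum_le_sum_of_subset_of_nonneg ?_ fun k _ _ => sq_nonneg _
    intro k hk
    simp only [Finset.mem_Ico] at hk
    exact Finset.mem_range.mpr hk.2
  -- second sums comparison
  have hsum : ∑ j ∈ Finset.Icc 1 (m - z), (1 - φ ^ (2 * j))
      ≤ ∑ j ∈ Finset.Icc 1 m, (1 - φ ^ (2 * j)) := by
    refine Finset.sum_le_sum_of_subset_of_nonneg
      (Finset.Icc_subset_Icc_right (Nat.sub_le m z)) fun j _ _ => ?_
    have : φ ^ (2 * j) ≤ 1 := by
      rw [pow_mul]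
      exact pow_le_one₀ hφ2' hφ2.le
    linarith
  have h1 : (0:ℝ) ≤ σ ^ 2 := sq_nonneg σ
  have h2 : (0:ℝ) ≤ σ ^ 2 / (1 - φ ^ 2) := div_nonneg h1 (by linarith)
  exact add_le_add (mul_le_mul_of_nonneg_left hquad h1)
    (mul_le_mul_of_nonneg_left hsum h2)
end

section
/- Let φ, σ be real numbers with |φ| < 1 and σ > 0, let m > 1 be an integer, and let 0 < z₁ ≤ z₂ < m. Let Φ be the m×m lower-triangular matrix with Φ_{ij} = φ^{i−j} for i ≥ j and 0 otherwise, and u_z ∈ ℝ^m with (u_z)_j = 1 for j ≤ m−z and 0 otherwise. Then σ² u_{z₂}ᵀΦΦᵀu_{z₂} + (σ²/(1−φ²)) Σ_{j=1}^{m−z₂} (1 − φ^{2j}) ≤ σ² u_{z₁}ᵀΦΦᵀu_{z₁} + (σ²/(1−φ²)) Σ_{j=1}^{m−z₁} (1 − φ^{2j}); that is, every additional step of new information results in an overall lower total MSE of the updated and reconciled forecasts. -/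
/-!
Writing `k = m - z`, the `l`-th entry of `Φᵀ u_z` is the geometric sum `∑_{t < k - l} φ^t`, so the
top-level MSE is `σ² ∑_{j=1}^{k} (∑_{t<j} φ^t)²`, while `(1 - φ^{2j}) / (1 - φ²)` is the geometric
sum `∑_{i<j} φ^{2i}` (or `0` when `φ² = 1`, by division by zero). The total MSE is therefore a sum of nonnegative terms over the `k` unobserved periods, and it can
only decrease when `z` grows.
-/

open Matrix Finset

theorem dotProduct_mul_transpose_mulVec_self {l n R : Type*} [Fintype l] [Fintype n]
    [CommSemiring R] (M : Matrix l n R) (v : l → R) :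
    v ⬝ᵥ (M * Mᵀ) *ᵥ v = (Mᵀ *ᵥ v) ⬝ᵥ (Mᵀ *ᵥ v) := by
  rw [← mulVec_mulVec, dotProduct_mulVec, mulVec_transpose]

theorem one_sub_pow_div_one_sub_nonneg {K : Type*} [Field K] [LinearOrder K]
    [IsStrictOrderedRing K] {x : K} (hx : 0 ≤ x) (n : ℕ) : 0 ≤ (1 - x ^ n) / (1 - x) := by
  rcases eq_or_ne x 1 with rfl | hx1
  · simp
  · rw [← neg_div_neg_eq, neg_sub, neg_sub, ← geom_sum_eq hx1]
    positivity

section AR1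

variable {R : Type*} [CommSemiring R]

def ar1Matrix (φ : R) (m : ℕ) : Matrix (Fin m) (Fin m) R :=
  of fun i j => if (j : ℕ) ≤ i then φ ^ ((i : ℕ) - j) else 0

def firstIndicator (m k : ℕ) : Fin m → R :=
  fun j => if (j : ℕ) < k then 1 else 0

theorem ar1Matrix_transpose_mulVec_firstIndicator (φ : R) {m k : ℕ} (hk : k ≤ m) (l : Fin m) :
    ((ar1Matrix φ m)ᵀ *ᵥ firstIndicator m k) l = ∑ t ∈ range (k - l), φ ^ t := by
  have hterm : ∀ j : ℕ, (if (l : ℕ) ≤ j then φ ^ (j - l) else 0) * (if j < k then 1 else 0)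
      = if j ∈ Ico (l : ℕ) k then φ ^ (j - l) else 0 := by
    intro j
    by_cases h₁ : (l : ℕ) ≤ j <;> by_cases h₂ : j < k <;> simp [h₁, h₂]
  calc ((ar1Matrix φ m)ᵀ *ᵥ firstIndicator m k) l
      = ∑ j ∈ range m, if j ∈ Ico (l : ℕ) k then φ ^ (j - l) else 0 := by
        simp only [← hterm]
        exact Fin.sum_univ_eq_sum_range
          (fun j => (if (l : ℕ) ≤ j then φ ^ (j - l) else 0) * (if j < k then 1 else 0)) m
    _ = ∑ j ∈ Ico (l : ℕ) k, φ ^ (j - l) := by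
        rw [sum_ite_mem, inter_eq_right.2 fun j hj => mem_range.2 ((mem_Ico.1 hj).2.trans_le hk)]
    _ = ∑ t ∈ range (k - l), φ ^ t := by
        rw [sum_Ico_eq_sum_range]
        simp only [Nat.add_sub_cancel_left]

theorem firstIndicator_dotProduct_ar1Matrix_mul_transpose_mulVec (φ : R) {m k : ℕ}
    (hk : k ≤ m) :
    firstIndicator m k ⬝ᵥ (ar1Matrix φ m * (ar1Matrix φ m)ᵀ) *ᵥ firstIndicator m k =
      ∑ j ∈ Icc 1 k, (∑ t ∈ range j, φ ^ t) ^ 2 := by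
  set g : ℕ → R := fun n => (∑ t ∈ range n, φ ^ t) ^ 2
  calc _ = ∑ l : Fin m, g (k - l) := by
        rw [dotProduct_mul_transpose_mulVec_self]
        simp only [dotProduct, ar1Matrix_transpose_mulVec_firstIndicator φ hk, g, sq]
    _ = ∑ l ∈ range k, g (k - l) := by
        rw [Fin.sum_univ_eq_sum_range (fun l => g (k - l))]
        refine (sum_subset (range_subset_range.2 hk) fun l _ hl => ?_).symm
        simp [g, Nat.sub_eq_zero_of_le (not_lt.1 (mem_range.not.1 hl))]
    _ = ∑ j ∈ Icc 1 k, g j := by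
        rw [← Nat.Ico_zero_eq_range, sum_Ico_reflect g 0 le_self_add, Nat.add_sub_cancel_left,
          Nat.sub_zero, Ico_add_one_right_eq_Icc]

end AR1

section TotalMSE

variable {K : Type*} [Field K]

/-- The total MSE after `z` new observations, indexed by the number `k = m - z` of bottom-level
periods that remain unobserved. -/
def ar1TotalMSE (φ σ : K) (m k : ℕ) : K :=
  σ ^ 2 * (firstIndicator m k ⬝ᵥ (ar1Matrix φ m * (ar1Matrix φ m)ᵀ) *ᵥ firstIndicator m k) +
    σ ^ 2 / (1 - φ ^ 2) * ∑ j ∈ Icc 1 k, (1 - φ ^ (2 * j))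

theorem ar1TotalMSE_eq_sum (φ σ : K) {m k : ℕ} (hk : k ≤ m) :
    ar1TotalMSE φ σ m k =
      ∑ j ∈ Icc 1 k, σ ^ 2 * ((∑ t ∈ range j, φ ^ t) ^ 2 + (1 - (φ ^ 2) ^ j) / (1 - φ ^ 2)) := by
  simp only [ar1TotalMSE, firstIndicator_dotProduct_ar1Matrix_mul_transpose_mulVec φ hk,
    mul_sum, ← sum_add_distrib, pow_mul, mul_add, mul_div_assoc', div_mul_eq_mul_div]

theorem ar1TotalMSE_mono [LinearOrder K] [IsStrictOrderedRing K] (φ σ : K) {m k₁ k₂ : ℕ}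
    (hk : k₁ ≤ k₂) (hm : k₂ ≤ m) :
    ar1TotalMSE φ σ m k₁ ≤ ar1TotalMSE φ σ m k₂ := by
  rw [ar1TotalMSE_eq_sum φ σ (hk.trans hm), ar1TotalMSE_eq_sum φ σ hm]
  refine sum_le_sum_of_subset_of_nonneg (Icc_subset_Icc_right hk) fun j _ _ => ?_
  have := one_sub_pow_div_one_sub_nonneg (sq_nonneg φ) j
  positivity

end TotalMSE

theorem ar1_total_mse_antitone_in_new_data_general (φ σ : ℝ)
    (m z₁ z₂ : ℕ) (h12 : z₁ ≤ z₂)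
    (Φ : Matrix (Fin m) (Fin m) ℝ)
    (hΦ : Φ = Matrix.of fun (i j : Fin m) =>
      if (j : ℕ) ≤ (i : ℕ) then φ ^ ((i : ℕ) - (j : ℕ)) else 0)
    (u : ℕ → Fin m → ℝ)
    (hu : ∀ w, u w = fun (j : Fin m) => if (j : ℕ) < m - w then 1 else 0) :
    σ ^ 2 * (u z₂ ⬝ᵥ (Φ * Φᵀ).mulVec (u z₂)) +
        σ ^ 2 / (1 - φ ^ 2) * ∑ j ∈ Finset.Icc 1 (m - z₂), (1 - φ ^ (2 * j)) ≤
      σ ^ 2 * (u z₁ ⬝ᵥ (Φ * Φᵀ).mulVec (u z₁)) +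
        σ ^ 2 / (1 - φ ^ 2) * ∑ j ∈ Finset.Icc 1 (m - z₁), (1 - φ ^ (2 * j)) := by
  subst hΦ
  obtain rfl : u = fun w => (firstIndicator m (m - w) : Fin m → ℝ) := funext hu
  exact ar1TotalMSE_mono φ σ (Nat.sub_le_sub_left h12 m) (Nat.sub_le m z₁)

/-- Corollary 2 for K = {m, 1} with a bottom-level stationary AR(1): every
additional step of new information results in an overall lower total MSE of the
updated and reconciled forecasts. -/
theorem ar1_total_mse_antitone_in_new_data (φ σ : ℝ) (hφ : |φ| < 1) (hσ : 0 < σ)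
    (m z₁ z₂ : ℕ) (hm : 1 < m) (hz₁ : 0 < z₁) (h12 : z₁ ≤ z₂) (hz₂ : z₂ < m)
    (Φ : Matrix (Fin m) (Fin m) ℝ)
    (hΦ : Φ = Matrix.of fun (i j : Fin m) =>
      if (j : ℕ) ≤ (i : ℕ) then φ ^ ((i : ℕ) - (j : ℕ)) else 0)
    (u : ℕ → Fin m → ℝ)
    (hu : ∀ w, u w = fun (j : Fin m) => if (j : ℕ) < m - w then 1 else 0) :
    σ ^ 2 * (u z₂ ⬝ᵥ (Φ * Φᵀ).mulVec (u z₂)) +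
        σ ^ 2 / (1 - φ ^ 2) * ∑ j ∈ Finset.Icc 1 (m - z₂), (1 - φ ^ (2 * j)) ≤
      σ ^ 2 * (u z₁ ⬝ᵥ (Φ * Φᵀ).mulVec (u z₁)) +
        σ ^ 2 / (1 - φ ^ 2) * ∑ j ∈ Finset.Icc 1 (m - z₁), (1 - φ ^ (2 * j)) :=
  ar1_total_mse_antitone_in_new_data_general φ σ m z₁ z₂ h12 Φ hΦ u hu
end
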